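/- arXiv:2506.03528 — 2 statements merged into one kernel-verified Lean document; each statement's English description precedes it below -/
import Mathlib

section
/- Existence of a best challenge scheme (Lemma BC): for any SCF f and any challenge scheme x̄(·,·), there exists a challenge scheme x(·,·) such that for every agent i, state θ̃, and type θ_i, the truth-telling gives the best test allocation: u_i(x(θ̃, θ_i), θ_i) ≥ u_i(x(θ̃, θ_i'), θ_i) for all θ_i' ∈ Θ_i. -/
/-- `x` is a challenge scheme for the SCF `f`: for each agent `i`, state `θ̃` and type
`θi`, the test allocation `x i θ̃ θi` lies in `L_i(f(θ̃), θ̃_i) ∩ SU_i(f(θ̃), θi)`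
whenever this intersection is nonempty, and equals `f θ̃` otherwise. -/
def IsChallengeScheme {ι Θ X : Type} (Θi : ι → Type) (typ : Θ → ∀ i, Θi i)
    (u : ∀ i, X → Θi i → ℝ) (f : Θ → X)
    (x : ∀ i : ι, Θ → Θi i → X) : Prop :=
  ∀ (i : ι) (θt : Θ) (θi : Θi i),
    ((∃ x' : X, u i x' (typ θt i) ≤ u i (f θt) (typ θt i) ∧
                u i x' θi > u i (f θt) θi) →
      (u i (x i θt θi) (typ θt i) ≤ u i (f θt) (typ θt i) ∧
       u i (x i θt θi) θi > u i (f θt) θi)) ∧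
    ((¬ ∃ x' : X, u i x' (typ θt i) ≤ u i (f θt) (typ θt i) ∧
                  u i x' θi > u i (f θt) θi) →
      x i θt θi = f θt)

/-- Lemma BC: there is a best challenge scheme, under which truth-telling yields the
best test allocation. -/
theorem exists_best_challenge_scheme
    {ι Θ X : Type} [Fintype Θ] (Θi : ι → Type) [∀ i, Fintype (Θi i)]
    (typ : Θ → ∀ i, Θi i) (u : ∀ i, X → Θi i → ℝ) (f : Θ → X)
    (xbar : ∀ i : ι, Θ → Θi i → X)
    (hbar : IsChallengeScheme Θi typ u f xbar) :
    ∃ x : ∀ i : ι, Θ → Θi i → X,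
      IsChallengeScheme Θi typ u f x ∧
      ∀ (i : ι) (θt : Θ) (θi θi' : Θi i),
        u i (x i θt θi) θi ≥ u i (x i θt θi') θi := by
  classical
  -- key existence: for each (i, θt, θi) pick an optimal feasible candidate
  have key : ∀ (i : ι) (θt : Θ) (θi : Θi i), ∃ y : X,
      ((∃ x' : X, u i x' (typ θt i) ≤ u i (f θt) (typ θt i) ∧
                  u i x' θi > u i (f θt) θi) →
        ((∃ θi'' : Θi i, y = xbar i θt θi'') ∧
         u i y (typ θt i) ≤ u i (f θt) (typ θt i) ∧
         u i y θi > u i (f θt) θi ∧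
         ∀ z : X, (∃ θi'' : Θi i, z = xbar i θt θi'') →
           u i z (typ θt i) ≤ u i (f θt) (typ θt i) →
           u i z θi > u i (f θt) θi → u i z θi ≤ u i y θi)) ∧
      ((¬ ∃ x' : X, u i x' (typ θt i) ≤ u i (f θt) (typ θt i) ∧
                    u i x' θi > u i (f θt) θi) → y = f θt) := by
    intro i θt θi
    by_cases h : ∃ x' : X, u i x' (typ θt i) ≤ u i (f θt) (typ θt i) ∧
                  u i x' θi > u i (f θt) θi
    · -- maximize over the finite set of candidates
      set T : Finset (Θi i) := Finset.univ.filter (fun θi'' =>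
        u i (xbar i θt θi'') (typ θt i) ≤ u i (f θt) (typ θt i) ∧
        u i (xbar i θt θi'') θi > u i (f θt) θi) with hT
      have hne : T.Nonempty := by
        refine ⟨θi, ?_⟩
        simp only [hT, Finset.mem_filter, Finset.mem_univ, true_and]
        exact (hbar i θt θi).1 h
      obtain ⟨b, hbT, hbmax⟩ := T.exists_max_image (fun θi'' => u i (xbar i θt θi'') θi) hne
      simp only [hT, Finset.mem_filter, Finset.mem_univ, true_and] at hbT
      refine ⟨xbar i θt b, fun _ => ⟨⟨b, rfl⟩, hbT.1, hbT.2, ?_⟩, fun hc => absurd h hc⟩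
      rintro z ⟨θi'', rfl⟩ hz1 hz2
      refine hbmax θi'' ?_
      simp only [hT, Finset.mem_filter, Finset.mem_univ, true_and]
      exact ⟨hz1, hz2⟩
    · exact ⟨f θt, fun h' => absurd h' h, fun _ => rfl⟩
  choose x hx1 hx2 using key
  refine ⟨x, ?_, ?_⟩
  · intro i θt θi
    constructor
    · intro h
      obtain ⟨_, h1, h2, _⟩ := hx1 i θt θi h
      exact ⟨h1, h2⟩
    · exact hx2 i θt θi
  · intro i θt θi θi'
    by_cases h' : ∃ x' : X, u i x' (typ θt i) ≤ u i (f θt) (typ θt i) ∧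
                  u i x' θi' > u i (f θt) θi'
    · obtain ⟨hmem', hL', _, _⟩ := hx1 i θt θi' h'
      by_cases h : ∃ x' : X, u i x' (typ θt i) ≤ u i (f θt) (typ θt i) ∧
                  u i x' θi > u i (f θt) θi
      · obtain ⟨_, _, hSU, hmax⟩ := hx1 i θt θi h
        by_cases hgt : u i (x i θt θi') θi > u i (f θt) θi
        · exact hmax _ hmem' hL' hgt
        · push_neg at hgt
          exact le_of_lt (lt_of_le_of_lt hgt hSU)
      · -- intersection for θi empty, so x i θt θi = f θt
        rw [hx2 i θt θi h]
        by_contra hc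
        push_neg at hc
        exact h ⟨x i θt θi', hL', hc⟩
    · rw [hx2 i θt θi' h']
      by_cases h : ∃ x' : X, u i x' (typ θt i) ≤ u i (f θt) (typ θt i) ∧
                  u i x' θi > u i (f θt) θi
      · exact le_of_lt (hx1 i θt θi h).2.2.1
      · rw [hx2 i θt θi h]
end

section
/- In the construction of the best challenge scheme, the modified scheme remains a valid challenge scheme: if x̄(θ̃, θ_i) ≠ f(θ̃) for some θ_i ∈ Θ_i, and x(θ̃, θ_i) is defined as a most preferred allocation of type θ_i in the finite nonempty set X(θ̃) = {x̄(θ̃, θ_i') : θ_i' ∈ Θ_i, x̄(θ̃, θ_i') ≠ f(θ̃)}, then whenever L_i(f(θ̃), θ̃_i) ∩ SU_i(f(θ̃), θ_i) ≠ ∅, we have x(θ̃, θ_i) ∈ L_i(f(θ̃), θ̃_i) ∩ SU_i(f(θ̃), θ_i). -/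
/-- In the construction of the best challenge scheme, replacing the test allocation by a
most preferred allocation of the true type in the set of non-`f` test allocations keeps
the scheme a valid challenge scheme. Here `ft = f(θ̃)`, `θt = θ̃_i`, and `xbar` is the
original challenge scheme (for the fixed state `θ̃`). -/
theorem modified_scheme_is_challenge_scheme
    {Θi X : Type} [Fintype Θi]
    (u : X → Θi → ℝ)          -- u_i(·, ·)
    (ft : X)                  -- f(θ̃)
    (θt : Θi)                 -- θ̃_i
    (xbar : Θi → X)           -- the original challenge scheme at state θ̃
    (hbar : ∀ θ' : Θi,
      ((∃ x' : X, u x' θt ≤ u ft θt ∧ u x' θ' > u ft θ') →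
        (u (xbar θ') θt ≤ u ft θt ∧ u (xbar θ') θ' > u ft θ')) ∧
      ((¬ ∃ x' : X, u x' θt ≤ u ft θt ∧ u x' θ' > u ft θ') → xbar θ' = ft))
    (θi : Θi) (x : X)
    -- X(θ̃) is nonempty:
    (hne : ∃ θ0 : Θi, xbar θ0 ≠ ft)
    -- x is a most preferred allocation of type θi in X(θ̃):
    (hmem : ∃ θ' : Θi, xbar θ' ≠ ft ∧ x = xbar θ')
    (hmax : ∀ θ' : Θi, xbar θ' ≠ ft → u x θi ≥ u (xbar θ') θi)
    -- the intersection L_i(f(θ̃), θ̃_i) ∩ SU_i(f(θ̃), θi) is nonempty: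
    (hint : ∃ x' : X, u x' θt ≤ u ft θt ∧ u x' θi > u ft θi) :
    u x θt ≤ u ft θt ∧ u x θi > u ft θi := by
  obtain ⟨hle, hgt⟩ := (hbar θi).1 hint
  have hne_i : xbar θi ≠ ft := fun h => by rw [h] at hgt; exact lt_irrefl _ hgt
  obtain ⟨θ', hθ'ne, hx⟩ := hmem
  constructor
  · by_cases h : ∃ x' : X, u x' θt ≤ u ft θt ∧ u x' θ' > u ft θ'
    · rw [hx]; exact ((hbar θ').1 h).1
    · exact absurd ((hbar θ').2 h) hθ'ne
  · exact lt_of_lt_of_le hgt (hmax θi hne_i)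
end
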